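/- Let d ≥ 0 and r ≥ 0 be integers and let μ1, …, μ10 be nonnegative integers satisfying conditions (A)–(D) (the conditions satisfied by the knot multiplicities of a C^r-smooth simplex spline of degree d on the Powell–Sabin 12-split). If d ≤ 2r + 1, then μ7 = μ8 = μ9 = 0. -/

import Mathlib

/-!
Each of `p₇, p₈, p₉` lies on exactly two of the six lines of condition (C), and (A) pushes the
support of `μ`, once it contains that vertex, into the union of those two lines. By (D) neither
line contains the whole support, so each line carries a second knot and (C) bounds its
multiplicity sum by `d + 1 - r`. Adding the two bounds counts the vertex twice:
`d + 3 + μᵥ ≤ 2 (d + 1 - r)`, i.e. `μᵥ ≤ d - 2r - 1 ≤ 0`.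
-/

open Finset

theorem sum_add_eq_sum_add_sum {ι M : Type*} [Fintype ι] [DecidableEq ι] [AddCommMonoid M]
    {f : ι → M} {L L' : Finset ι} {i : ι} (hLL' : L ∩ L' = {i})
    (hsupp : ∀ j ∉ L ∪ L', f j = 0) :
    ∑ j, f j + f i = ∑ j ∈ L, f j + ∑ j ∈ L', f j := by
  rw [← sum_union_inter, hLL', sum_singleton,
    sum_subset (subset_univ _) fun j _ hj => hsupp j hj]

section KnotLines

variable {ι k V P : Type*} [DivisionRing k] [AddCommGroup V] [Module k V] [AddTorsor V P]

def LineBound (μ : ι → ℕ) (d r : ℕ) (L : Finset ι) : Prop :=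
  (∃ i ∈ L, ∃ j ∈ L, i ≠ j ∧ 0 < μ i ∧ 0 < μ j) → (∑ i ∈ L, (μ i : ℤ)) ≤ (d : ℤ) + 1 - (r : ℤ)

theorem exists_pos_notMem_of_collinear {p : ι → P} {μ : ι → ℕ}
    (hD : ∃ i j l : ι, 0 < μ i ∧ 0 < μ j ∧ 0 < μ l ∧ AffineIndependent k ![p i, p j, p l])
    {M : Finset ι} (hM : Collinear k (p '' M)) : ∃ j ∉ M, 0 < μ j := by
  obtain ⟨i, j, l, hi, hj, hl, hind⟩ := hD
  by_contra! hsupp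
  have hmem : ∀ x, 0 < μ x → x ∈ M := fun x hx => by_contra fun h => (hsupp x h).not_gt hx
  refine affineIndependent_iff_not_collinear_set.1 hind (hM.subset ?_)
  simp only [Set.insert_subset_iff, Set.singleton_subset_iff]
  exact ⟨⟨i, hmem i hi, rfl⟩, ⟨j, hmem j hj, rfl⟩, ⟨l, hmem l hl, rfl⟩⟩

theorem exists_ne_pos_of_inter_eq_singleton [DecidableEq ι] {p : ι → P} {μ : ι → ℕ}
    (hD : ∃ i j l : ι, 0 < μ i ∧ 0 < μ j ∧ 0 < μ l ∧ AffineIndependent k ![p i, p j, p l])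
    {i : ι} {L L' : Finset ι} (hL' : Collinear k (p '' L')) (hLL' : L ∩ L' = {i})
    (hsupp : ∀ j ∉ L ∪ L', μ j = 0) : ∃ j ∈ L, i ≠ j ∧ 0 < μ j := by
  obtain ⟨j, hjL', hj⟩ := exists_pos_notMem_of_collinear hD hL'
  have hjL : j ∈ L := by
    by_contra hjL
    exact hj.ne' (hsupp j (by simp [hjL, hjL']))
  refine ⟨j, hjL, ?_, hj⟩
  rintro rfl
  exact hjL' (mem_inter.1 (hLL' ▸ mem_singleton_self i)).2

theorem eq_zero_of_inter_eq_singleton [Fintype ι] [DecidableEq ι]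
    {p : ι → P} {μ : ι → ℕ} {d r : ℕ}
    (hB : ∑ i, μ i = d + 3)
    (hD : ∃ i j l : ι, 0 < μ i ∧ 0 < μ j ∧ 0 < μ l ∧ AffineIndependent k ![p i, p j, p l])
    (hd : d ≤ 2 * r + 1) {i : ι} {L L' : Finset ι}
    (hL : Collinear k (p '' L)) (hL' : Collinear k (p '' L'))
    (hCL : LineBound μ d r L) (hCL' : LineBound μ d r L')
    (hLL' : L ∩ L' = {i}) (hsupp : 0 < μ i → ∀ j ∉ L ∪ L', μ j = 0) : μ i = 0 := by
  by_contra hne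
  have hi : 0 < μ i := Nat.pos_of_ne_zero hne
  have hsupp := hsupp hi
  have hiL : i ∈ L ∧ i ∈ L' := mem_inter.1 (hLL' ▸ mem_singleton_self i)
  obtain ⟨j, hjL, hij, hj⟩ := exists_ne_pos_of_inter_eq_singleton hD hL' hLL' hsupp
  obtain ⟨j', hjL', hij', hj'⟩ := exists_ne_pos_of_inter_eq_singleton hD hL
    (inter_comm L L' ▸ hLL') (union_comm L L' ▸ hsupp)
  have hbound := hCL ⟨i, hiL.1, j, hjL, hij, hi, hj⟩
  have hbound' := hCL' ⟨i, hiL.2, j', hjL', hij', hi, hj'⟩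
  have hsum := sum_add_eq_sum_add_sum (f := fun j => (μ j : ℤ)) hLL'
    fun j hj => by simp [hsupp j hj]
  have hB' : ∑ j, (μ j : ℤ) = d + 3 := by exact_mod_cast hB
  omega

end KnotLines

section PowellSabin

variable {V : Type*} [AddCommGroup V] [Module ℝ V]

/-- Vertex `i` is the paper's `p_{i+1}`; the theorem below indexes `μ` the same way. -/
noncomputable def powellSabinVertices (a b c : V) : Fin 10 → V :=
  let m₁ : V := (2⁻¹ : ℝ) • (a + b)
  let m₂ : V := (2⁻¹ : ℝ) • (b + c)
  let m₃ : V := (2⁻¹ : ℝ) • (c + a)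
  ![a, b, c, m₁, m₂, m₃, (2⁻¹ : ℝ) • (m₁ + m₃), (2⁻¹ : ℝ) • (m₁ + m₂), (2⁻¹ : ℝ) • (m₂ + m₃),
    (3⁻¹ : ℝ) • (a + b + c)]

def powellSabinLines : List (Finset (Fin 10)) :=
  [{0, 4, 6, 9}, {3, 5, 6}, {1, 5, 7, 9}, {3, 4, 7}, {2, 3, 8, 9}, {4, 5, 8}]

theorem collinear_image_powellSabinVertices (a b c : V) :
    ∀ L ∈ powellSabinLines, Collinear ℝ (powellSabinVertices a b c '' L) := by
  simp only [powellSabinLines, List.mem_cons, List.not_mem_nil, or_false]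
  rintro L (rfl | rfl | rfl | rfl | rfl | rfl) <;>
    simp only [collinear_iff_exists_forall_eq_smul_vadd, coe_insert, coe_singleton,
      Set.image_insert_eq, Set.image_singleton, Set.forall_mem_insert, Set.mem_singleton_iff,
      forall_eq, vadd_eq_add, powellSabinVertices, Matrix.cons_val]
  · exact ⟨a, (2⁻¹ : ℝ) • (b + c) - a, ⟨0, by module⟩, ⟨1, by module⟩, ⟨2⁻¹, by module⟩,
      ⟨2 / 3, by module⟩⟩
  · exact ⟨(2⁻¹ : ℝ) • (a + b), (2⁻¹ : ℝ) • (c + a) - (2⁻¹ : ℝ) • (a + b), ⟨0, by module⟩,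
      ⟨1, by module⟩, ⟨2⁻¹, by module⟩⟩
  · exact ⟨b, (2⁻¹ : ℝ) • (c + a) - b, ⟨0, by module⟩, ⟨1, by module⟩, ⟨2⁻¹, by module⟩,
      ⟨2 / 3, by module⟩⟩
  · exact ⟨(2⁻¹ : ℝ) • (a + b), (2⁻¹ : ℝ) • (b + c) - (2⁻¹ : ℝ) • (a + b), ⟨0, by module⟩,
      ⟨1, by module⟩, ⟨2⁻¹, by module⟩⟩
  · exact ⟨c, (2⁻¹ : ℝ) • (a + b) - c, ⟨0, by module⟩, ⟨1, by module⟩, ⟨2⁻¹, by module⟩,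
      ⟨2 / 3, by module⟩⟩
  · exact ⟨(2⁻¹ : ℝ) • (b + c), (2⁻¹ : ℝ) • (c + a) - (2⁻¹ : ℝ) • (b + c), ⟨0, by module⟩,
      ⟨1, by module⟩, ⟨2⁻¹, by module⟩⟩

end PowellSabin

theorem knot_multiplicities_m789
    (p : Fin 10 → ℝ × ℝ)
    (h4 : p 3 = (2⁻¹ : ℝ) • (p 0 + p 1))
    (h5 : p 4 = (2⁻¹ : ℝ) • (p 1 + p 2))
    (h6 : p 5 = (2⁻¹ : ℝ) • (p 2 + p 0))
    (h7 : p 6 = (2⁻¹ : ℝ) • (p 3 + p 5))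
    (h8 : p 7 = (2⁻¹ : ℝ) • (p 3 + p 4))
    (h9 : p 8 = (2⁻¹ : ℝ) • (p 4 + p 5))
    (h10 : p 9 = (3⁻¹ : ℝ) • (p 0 + p 1 + p 2))
    (d r : ℕ) (μ : Fin 10 → ℕ)
    (hA : μ 0 * μ 7 = 0 ∧ μ 0 * μ 8 = 0 ∧ μ 7 * μ 8 = 0 ∧
          μ 1 * μ 6 = 0 ∧ μ 1 * μ 8 = 0 ∧ μ 6 * μ 8 = 0 ∧
          μ 2 * μ 6 = 0 ∧ μ 2 * μ 7 = 0 ∧ μ 6 * μ 7 = 0)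
    (hB : ∑ i, μ i = d + 3)
    (hC : ∀ L ∈ ([{0, 4, 6, 9}, {3, 5, 6}, {1, 5, 7, 9}, {3, 4, 7},
        {2, 3, 8, 9}, {4, 5, 8}] : List (Finset (Fin 10))),
      (∃ i ∈ L, ∃ j ∈ L, i ≠ j ∧ 0 < μ i ∧ 0 < μ j) →
        (∑ i ∈ L, (μ i : ℤ)) ≤ (d : ℤ) + 1 - (r : ℤ))
    (hD : ∃ i j k : Fin 10, 0 < μ i ∧ 0 < μ j ∧ 0 < μ k ∧
        AffineIndependent ℝ ![p i, p j, p k])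
    (hd : d ≤ 2 * r + 1) :
    μ 6 = 0 ∧ μ 7 = 0 ∧ μ 8 = 0 := by
  have hcol : ∀ L ∈ powellSabinLines, Collinear ℝ (p '' L) := by
    have hp : p = powellSabinVertices (p 0) (p 1) (p 2) := by
      funext i
      fin_cases i <;> simp [powellSabinVertices, h4, h5, h6, h7, h8, h9, h10]
    rw [hp]
    exact collinear_image_powellSabinVertices _ _ _
  have hzero {i : Fin 10} {L L' : Finset (Fin 10)} (hL : L ∈ powellSabinLines)
      (hL' : L' ∈ powellSabinLines) :=
    eq_zero_of_inter_eq_singleton (i := i) hB hD hd (hcol L hL) (hcol L' hL') (hC L hL) (hC L' hL')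
  refine ⟨hzero (L := {0, 4, 6, 9}) (L' := {3, 5, 6}) (by decide) (by decide) (by decide) ?_,
    hzero (L := {1, 5, 7, 9}) (L' := {3, 4, 7}) (by decide) (by decide) (by decide) ?_,
    hzero (L := {2, 3, 8, 9}) (L' := {4, 5, 8}) (by decide) (by decide) (by decide) ?_⟩ <;>
  · intro hi j hj
    simp only [mul_eq_zero, hi.ne', or_false, false_or] at hA
    fin_cases j <;> dsimp only [Fin.reduceFinMk, Fin.zero_eta, Fin.mk_one] at hj ⊢ <;>
      first | exact absurd hj (by decide) | omega
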